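/- arXiv:1711.08171 — 2 statements merged into one kernel-verified Lean document; each statement's English description precedes it below -/
import Mathlib

section
/- Let G=(V,E) be a finite connected weighted hypergraph and let the hypergraph gradient be defined by (∇ψ)([v1,...,vk]) = (√w(e)/√(k−1))·Σ_{i=1}^{k}(ψ(v_i)/√d(v_i) − ψ(v_1)/√d(v_1)). Then the divergence operator div: H(E)→H(V) satisfying the adjointness relation ⟨∇ψ, φ⟩_{H(E)} = ⟨ψ, −div φ⟩_{H(V)} for all ψ∈H(V), φ∈H(E) is given in closed form by (div φ)(v) = −Σ_{e∈E: v∈e} (√w(e)/(δ_e!·√(δ_e−1)·√d(v)))·φ(e) + Σ_{e∈E: e_[1]=v} δ_e·(√w(e)/(δ_e!·√(δ_e−1)·√d(v)))·φ(e). -/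
open Finset

/-- Hypergraph gradient: `(∇ψ)(e) = (√w(e)/√(δ_e−1)) · Σ_i (ψ(v_i)/√d(v_i) − ψ(e_[1])/√d(e_[1]))`. -/
noncomputable def hGrad {V : Type*} [Inhabited V] (w : List V → ℝ) (d : V → ℝ)
    (ψ : V → ℝ) (e : List V) : ℝ :=
  Real.sqrt (w e) / Real.sqrt ((e.length : ℝ) - 1) *
    ((e.map fun u => ψ u / Real.sqrt (d u)).sum
      - (e.length : ℝ) * (ψ e.headI / Real.sqrt (d e.headI)))

/-- Closed-form hypergraph divergence. -/
noncomputable def hDiv {V : Type*} [Inhabited V] [DecidableEq V] (E : Finset (List V))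
    (w : List V → ℝ) (d : V → ℝ) (φ : List V → ℝ) (v : V) : ℝ :=
  -∑ e ∈ E.filter (fun e => v ∈ e),
      Real.sqrt (w e) / ((Nat.factorial e.length : ℝ) * Real.sqrt ((e.length : ℝ) - 1)
        * Real.sqrt (d v)) * φ e
  + ∑ e ∈ E.filter (fun e => e.headI = v),
      (e.length : ℝ) * (Real.sqrt (w e) / ((Nat.factorial e.length : ℝ)
        * Real.sqrt ((e.length : ℝ) - 1) * Real.sqrt (d v))) * φ e

/-- The closed-form divergence is the (negative) adjoint of the hypergraph gradient:
`⟨∇ψ, φ⟩_{H(E)} = ⟨ψ, −div φ⟩_{H(V)}`. -/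
theorem hypergraph_divergence_adjoint {V : Type*} [Fintype V] [Inhabited V] [DecidableEq V]
    (E : Finset (List V)) (w : List V → ℝ) (d : V → ℝ)
    (hEnd : ∀ e ∈ E, e.Nodup) (hElen : ∀ e ∈ E, 2 ≤ e.length)
    (hEperm : ∀ e ∈ E, ∀ e' : List V, e'.Perm e → e' ∈ E)
    (hw : ∀ e ∈ E, 0 < w e) (hwperm : ∀ e e' : List V, e.Perm e' → w e = w e')
    (hd : ∀ v, d v = ∑ e ∈ E.filter (fun e => v ∈ e), w e) (hdpos : ∀ v, 0 < d v)
    (ψ : V → ℝ) (φ : List V → ℝ) :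
    ∑ e ∈ E, hGrad w d ψ e * φ e / (Nat.factorial e.length : ℝ)
      = ∑ v, ψ v * -(hDiv E w d φ v) := by
  classical
  have hR : ∀ v, ψ v * -(hDiv E w d φ v)
      = (∑ e ∈ E, if v ∈ e then
            ψ v * (Real.sqrt (w e) / ((Nat.factorial e.length : ℝ)
              * Real.sqrt ((e.length : ℝ) - 1) * Real.sqrt (d v)) * φ e) else 0)
        - ∑ e ∈ E, if e.headI = v then
            ψ v * ((e.length : ℝ) * (Real.sqrt (w e) / ((Nat.factorial e.length : ℝ)
              * Real.sqrt ((e.length : ℝ) - 1) * Real.sqrt (d v))) * φ e) else 0 := by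
    intro v
    rw [hDiv, neg_add, neg_neg, ← sub_eq_add_neg, mul_sub, Finset.mul_sum, Finset.mul_sum,
      Finset.sum_filter, Finset.sum_filter]
  rw [Finset.sum_congr rfl fun v _ => hR v, Finset.sum_sub_distrib, Finset.sum_comm,
    Finset.sum_comm (s := univ)]
  rw [← Finset.sum_sub_distrib]
  refine Finset.sum_congr rfl fun e he => ?_
  have h1 : (∑ v, if v ∈ e then
        ψ v * (Real.sqrt (w e) / ((Nat.factorial e.length : ℝ)
          * Real.sqrt ((e.length : ℝ) - 1) * Real.sqrt (d v)) * φ e) else 0)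
      = ∑ v ∈ e.toFinset, ψ v * (Real.sqrt (w e) / ((Nat.factorial e.length : ℝ)
          * Real.sqrt ((e.length : ℝ) - 1) * Real.sqrt (d v)) * φ e) := by
    rw [← Finset.sum_filter]
    refine Finset.sum_congr ?_ fun _ _ => rfl
    ext v; simp
  have h2 : (∑ v, if e.headI = v then
        ψ v * ((e.length : ℝ) * (Real.sqrt (w e) / ((Nat.factorial e.length : ℝ)
          * Real.sqrt ((e.length : ℝ) - 1) * Real.sqrt (d v))) * φ e) else 0)
      = ψ e.headI * ((e.length : ℝ) * (Real.sqrt (w e) / ((Nat.factorial e.length : ℝ)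
          * Real.sqrt ((e.length : ℝ) - 1) * Real.sqrt (d e.headI))) * φ e) := by
    rw [Finset.sum_ite_eq]
    simp
  rw [h1, h2]
  have h3 : (∑ v ∈ e.toFinset, ψ v * (Real.sqrt (w e) / ((Nat.factorial e.length : ℝ)
          * Real.sqrt ((e.length : ℝ) - 1) * Real.sqrt (d v)) * φ e))
      = (Real.sqrt (w e) / (Real.sqrt ((e.length : ℝ) - 1)))
        * ((e.map fun u => ψ u / Real.sqrt (d u)).sum) * φ e
          / (Nat.factorial e.length : ℝ) := by
    rw [← List.sum_toFinset _ (hEnd e he), Finset.mul_sum, Finset.sum_mul, Finset.sum_div]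
    refine Finset.sum_congr rfl fun v _ => ?_
    ring
  rw [h3, hGrad]
  ring
end

section
/- Let c_k(H) = min Ncut(Γ_V^k) over all partitions of V into k nonempty disjoint clusters, where Ncut(Γ_V^k) = Σ_{i=1}^{k} X_iᵀ(D−W)X_i / (X_iᵀDX_i) with X the {0,1} indicator matrix of the partition. If λ_1 ≤ ⋯ ≤ λ_{|V|} are the eigenvalues of L = D^{−1/2}(D−W)D^{−1/2}, then Σ_{i=1}^{k} λ_i ≤ c_k(H). -/
/-!
The columns `D^{1/2} X_j / ‖D^{1/2} X_j‖` of the normalized indicator matrix are orthonormal, since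
the clusters are disjoint, and the Rayleigh quotient of `L` at the `j`-th column is the `j`-th term
of `Ncut`. So `Ncut` is `∑_j z_jᵀ L z_j` for an orthonormal `k`-frame `z`. Expanding in an
eigenbasis `b` of `L` gives `∑_i λ_i c_i` with `c_i = ∑_j ⟪b_i, z_j⟫²`; Bessel's inequality gives
`c_i ≤ 1`, Parseval gives `∑_i c_i = k`, and among such weights `∑_i λ_i c_i` is smallest when
the weight sits on the `k` smallest eigenvalues (Ky Fan).
-/

open Matrix Finset
open scoped RealInnerProductSpace

theorem sum_filter_val_lt_le_sum_mul_of_monotone {n k : ℕ} {μ b : Fin n → ℝ} (hμ : Monotone μ)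
    (hb0 : ∀ i, 0 ≤ b i) (hb1 : ∀ i, b i ≤ 1) (hbk : ∑ i, b i = k) :
    ∑ i ∈ univ.filter (fun i : Fin n => (i : ℕ) < k), μ i ≤ ∑ i, μ i * b i := by
  have hkn : k ≤ n := by
    have : (k : ℝ) ≤ n := by simpa [← hbk] using sum_le_sum fun i (_ : i ∈ univ) => hb1 i
    exact_mod_cast this
  rcases Nat.eq_zero_or_pos n with rfl | hn
  · simp
  -- `t` separates the values at indices below `k` from those above, so `(μ i - t) (b i - χ i) ≥ 0`
  set t := μ ⟨k - 1, by omega⟩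
  let χ : Fin n → ℝ := fun i => if (i : ℕ) < k then 1 else 0
  have hχk : ∑ i, χ i = k := by simp [χ, Finset.sum_boole, Fin.card_filter_val_lt, hkn]
  have hpoint : ∀ i, μ i * χ i ≤ μ i * b i + t * (χ i - b i) := by
    intro i
    by_cases hik : (i : ℕ) < k
    · have : μ i ≤ t := hμ (Fin.le_def.mpr (by simp; omega))
      simp only [χ, if_pos hik]
      nlinarith [hb1 i]
    · have : t ≤ μ i := hμ (Fin.le_def.mpr (by simp; omega))
      simp only [χ, if_neg hik]
      nlinarith [hb0 i]
  calc ∑ i ∈ univ.filter (fun i : Fin n => (i : ℕ) < k), μ i = ∑ i, μ i * χ i := by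
        rw [sum_filter]; exact sum_congr rfl fun i _ => by simp [χ]
    _ ≤ ∑ i, (μ i * b i + t * (χ i - b i)) := sum_le_sum fun i _ => hpoint i
    _ = ∑ i, μ i * b i := by
        rw [sum_add_distrib, ← mul_sum, sum_sub_distrib, hχk, hbk, sub_self, mul_zero, add_zero]

theorem orthonormal_inv_norm_smul {ι E : Type*} [NormedAddCommGroup E] [InnerProductSpace ℝ E]
    {v : ι → E} (hv : ∀ i, v i ≠ 0) (horth : Pairwise fun i j => ⟪v i, v j⟫ = 0) :
    Orthonormal ℝ fun i => ‖v i‖⁻¹ • v i := by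
  refine ⟨fun i => by simp [norm_smul, hv i], fun i j hij => ?_⟩
  simp [inner_smul_left, inner_smul_right, horth hij]

namespace Matrix.IsHermitian

variable {n : Type*} [Fintype n] [DecidableEq n] {A : Matrix n n ℝ}

theorem dotProduct_mulVec_eq_sum_eigenvalues_mul_sq (hA : A.IsHermitian)
    (x : EuclideanSpace ℝ n) :
    ⇑x ⬝ᵥ A *ᵥ ⇑x = ∑ i, hA.eigenvalues i * ⟪hA.eigenvectorBasis i, x⟫ ^ 2 := by
  have hAx : A *ᵥ ⇑x =
      ∑ i, (⟪hA.eigenvectorBasis i, x⟫ * hA.eigenvalues i) • ⇑(hA.eigenvectorBasis i) := by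
    conv_lhs => rw [← hA.eigenvectorBasis.sum_repr' x]
    simp only [WithLp.ofLp_sum, WithLp.ofLp_smul, mulVec_sum, mulVec_smul,
      hA.mulVec_eigenvectorBasis, smul_smul]
  rw [hAx, dotProduct_sum]
  refine sum_congr rfl fun i _ => ?_
  have : ⇑x ⬝ᵥ ⇑(hA.eigenvectorBasis i) = ⟪hA.eigenvectorBasis i, x⟫ := by
    rw [EuclideanSpace.inner_eq_star_dotProduct, star_trivial]
  rw [dotProduct_smul, smul_eq_mul, this]
  ring

theorem sum_eigenvalues_le_sum_dotProduct_mulVec (hA : A.IsHermitian) {ι : Type*} [Fintype ι]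
    {z : ι → EuclideanSpace ℝ n} (hz : Orthonormal ℝ z) (σ : Fin (Fintype.card n) ≃ n)
    (hσ : Monotone fun i => hA.eigenvalues (σ i)) :
    ∑ i ∈ univ.filter (fun i : Fin (Fintype.card n) => (i : ℕ) < Fintype.card ι),
        hA.eigenvalues (σ i) ≤ ∑ j, ⇑(z j) ⬝ᵥ A *ᵥ ⇑(z j) := by
  set b := hA.eigenvectorBasis
  let c : n → ℝ := fun v => ∑ j, ⟪b v, z j⟫ ^ 2
  have hc_nonneg : ∀ v, 0 ≤ c v := fun v => sum_nonneg fun j _ => sq_nonneg _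
  have hc_le_one : ∀ v, c v ≤ 1 := by
    intro v
    simpa [c, real_inner_comm, b.orthonormal.1 v] using hz.sum_inner_products_le (b v) (s := univ)
  have hc_sum : ∑ v, c v = Fintype.card ι := by
    simp [c, sum_comm (s := univ (α := n)), b.sum_sq_inner_right, hz.1]
  have hquad : ∑ j, ⇑(z j) ⬝ᵥ A *ᵥ ⇑(z j) = ∑ v, hA.eigenvalues v * c v := by
    simp only [hA.dotProduct_mulVec_eq_sum_eigenvalues_mul_sq, c, mul_sum]
    exact sum_comm
  rw [hquad, ← σ.sum_comp]
  exact sum_filter_val_lt_le_sum_mul_of_monotone hσ (fun i => hc_nonneg _) (fun i => hc_le_one _)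
    (by rw [σ.sum_comp, hc_sum])

end Matrix.IsHermitian

section SqrtWeighted

variable {V : Type*} [Fintype V] [DecidableEq V]

noncomputable def sqrtWeighted (d x : V → ℝ) : EuclideanSpace ℝ V :=
  WithLp.toLp 2 fun v => √(d v) * x v

theorem inner_sqrtWeighted {d : V → ℝ} (hd : ∀ v, 0 ≤ d v) (x y : V → ℝ) :
    ⟪sqrtWeighted d x, sqrtWeighted d y⟫ = x ⬝ᵥ diagonal d *ᵥ y := by
  simp only [sqrtWeighted, EuclideanSpace.inner_toLp_toLp, star_trivial, dotProduct,
    mulVec_diagonal]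
  refine sum_congr rfl fun v _ => ?_
  linear_combination x v * y v * Real.mul_self_sqrt (hd v)

theorem dotProduct_mulVec_diagonal_mul_mul_diagonal {R : Type*} [CommSemiring R] (a x : V → R)
    (M : Matrix V V R) :
    x ⬝ᵥ (diagonal a * M * diagonal a) *ᵥ x = (a * x) ⬝ᵥ M *ᵥ (a * x) := by
  have hmul : ∀ w, diagonal a *ᵥ w = a * w := fun w => funext (mulVec_diagonal a w)
  have hvec : x ᵥ* diagonal a = a * x :=
    funext fun v => (vecMul_diagonal x a v).trans (mul_comm _ _)
  rw [← mulVec_mulVec, ← mulVec_mulVec, dotProduct_mulVec, hvec, hmul]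

theorem dotProduct_mulVec_inv_norm_smul_sqrtWeighted {d : V → ℝ} (hd : ∀ v, 0 < d v)
    (M : Matrix V V ℝ) (x : V → ℝ) :
    ⇑(‖sqrtWeighted d x‖⁻¹ • sqrtWeighted d x) ⬝ᵥ
        (diagonal (fun v => (√(d v))⁻¹) * M * diagonal fun v => (√(d v))⁻¹) *ᵥ
          ⇑(‖sqrtWeighted d x‖⁻¹ • sqrtWeighted d x) =
      (x ⬝ᵥ M *ᵥ x) / (x ⬝ᵥ diagonal d *ᵥ x) := by
  have hnorm : ‖sqrtWeighted d x‖ ^ 2 = x ⬝ᵥ diagonal d *ᵥ x := by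
    rw [← real_inner_self_eq_norm_sq, inner_sqrtWeighted fun v => (hd v).le]
  have hunweight : (fun v => (√(d v))⁻¹) * ⇑(sqrtWeighted d x) = x := by
    ext v
    simp [sqrtWeighted, (Real.sqrt_pos.mpr (hd v)).ne']
  rw [WithLp.ofLp_smul, mulVec_smul, dotProduct_smul, smul_dotProduct,
    dotProduct_mulVec_diagonal_mul_mul_diagonal, hunweight, ← hnorm, smul_eq_mul, smul_eq_mul]
  field_simp

end SqrtWeighted

section PartitionIndicator

variable {V ι : Type*} [Fintype V] [DecidableEq V] [DecidableEq ι]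

def partitionIndicator (f : V → ι) (j : ι) : V → ℝ := fun v => if f v = j then 1 else 0

theorem partitionIndicator_dotProduct_diagonal_mulVec_of_ne (f : V → ι) {i j : ι} (hij : i ≠ j)
    (d : V → ℝ) :
    partitionIndicator f i ⬝ᵥ diagonal d *ᵥ partitionIndicator f j = 0 := by
  refine sum_eq_zero fun v _ => ?_
  by_cases hv : f v = i <;> simp [partitionIndicator, mulVec_diagonal, hv, hij]

theorem partitionIndicator_dotProduct_diagonal_mulVec_self_pos {f : V → ι} {d : V → ℝ}
    (hd : ∀ v, 0 < d v) {v : V} {j : ι} (hv : f v = j) :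
    0 < partitionIndicator f j ⬝ᵥ diagonal d *ᵥ partitionIndicator f j := by
  refine sum_pos' (fun u _ => ?_) ⟨v, mem_univ v, by simp [partitionIndicator, mulVec_diagonal, hv, hd v]⟩
  by_cases hu : f u = j <;> simp [partitionIndicator, mulVec_diagonal, hu, (hd u).le]

end PartitionIndicator

theorem hypergraph_multiclass_ncut_lower_bound_general {V : Type*} [Fintype V] [DecidableEq V]
    (W : Matrix V V ℝ)
    (d : V → ℝ) (hdpos : ∀ u, 0 < d u)
    (k : ℕ) (f : V → Fin k) (hf : Function.Surjective f) :
    let Dm : Matrix V V ℝ := Matrix.diagonal d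
    let Dih : Matrix V V ℝ := Matrix.diagonal fun v => (Real.sqrt (d v))⁻¹
    let L : Matrix V V ℝ := Dih * (Dm - W) * Dih
    let X : Fin k → V → ℝ := fun j v => if f v = j then 1 else 0
    ∀ (hL : L.IsHermitian) (σ : Fin (Fintype.card V) ≃ V),
      Monotone (fun i => hL.eigenvalues (σ i)) →
      ∑ i ∈ Finset.univ.filter (fun i : Fin (Fintype.card V) => (i : ℕ) < k),
          hL.eigenvalues (σ i)
        ≤ ∑ j : Fin k, (X j ⬝ᵥ (Dm - W).mulVec (X j)) / (X j ⬝ᵥ Dm.mulVec (X j)) := by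
  intro Dm Dih L X hL σ hσ
  let y : Fin k → EuclideanSpace ℝ V := fun j => sqrtWeighted d (X j)
  have hy_orth : Pairwise fun i j => ⟪y i, y j⟫ = 0 := fun i j hij => by
    change ⟪y i, y j⟫ = 0
    rw [inner_sqrtWeighted fun v => (hdpos v).le]
    exact partitionIndicator_dotProduct_diagonal_mulVec_of_ne f hij d
  have hy_ne : ∀ j, y j ≠ 0 := fun j => by
    obtain ⟨v, hv⟩ := hf j
    rw [← inner_self_ne_zero (𝕜 := ℝ), inner_sqrtWeighted fun v => (hdpos v).le]
    exact (partitionIndicator_dotProduct_diagonal_mulVec_self_pos hdpos hv).ne'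
  have hkyfan :=
    hL.sum_eigenvalues_le_sum_dotProduct_mulVec (orthonormal_inv_norm_smul hy_ne hy_orth) σ hσ
  rw [Fintype.card_fin] at hkyfan
  exact hkyfan.trans_eq (sum_congr rfl fun j _ =>
    dotProduct_mulVec_inv_norm_smul_sqrtWeighted hdpos (Dm - W) (X j))

/-- Lower bound for the multiclass normalized hypergraph cut: the sum of the `k` smallest
eigenvalues of `L = D^{−1/2}(D−W)D^{−1/2}` is at most `Ncut(Γ_V^k)` for every partition
of `V` into `k` nonempty clusters. -/
theorem hypergraph_multiclass_ncut_lower_bound {V : Type*} [Fintype V] [DecidableEq V]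
    (W : Matrix V V ℝ) (hWs : W.IsSymm) (hWnn : ∀ u v, 0 ≤ W u v) (hW0 : ∀ u, W u u = 0)
    (d : V → ℝ) (hd : ∀ u, d u = ∑ v, W u v) (hdpos : ∀ u, 0 < d u)
    (k : ℕ) (hk : k ≤ Fintype.card V) (f : V → Fin k) (hf : Function.Surjective f) :
    let Dm : Matrix V V ℝ := Matrix.diagonal d
    let Dih : Matrix V V ℝ := Matrix.diagonal fun v => (Real.sqrt (d v))⁻¹
    let L : Matrix V V ℝ := Dih * (Dm - W) * Dih
    let X : Fin k → V → ℝ := fun j v => if f v = j then 1 else 0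
    ∀ (hL : L.IsHermitian) (σ : Fin (Fintype.card V) ≃ V),
      Monotone (fun i => hL.eigenvalues (σ i)) →
      ∑ i ∈ Finset.univ.filter (fun i : Fin (Fintype.card V) => (i : ℕ) < k),
          hL.eigenvalues (σ i)
        ≤ ∑ j : Fin k, (X j ⬝ᵥ (Dm - W).mulVec (X j)) / (X j ⬝ᵥ Dm.mulVec (X j)) :=
  hypergraph_multiclass_ncut_lower_bound_general W d hdpos k f hf
end
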